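/- arXiv:0910.1645 — 3 statements merged into one kernel-verified Lean document; each statement's English description precedes it below -/
import Mathlib

section
/- Let S_0, …, S_8 be a Cl⁺(9)-system on ℝ^16. Then for every X ∈ ℝ^16: X lies in the linear span of S_0X, …, S_8X, and Σ_{i=0}^{8} ⟨S_iX, X⟩S_iX = ‖X‖²X. Moreover, for all X, Y ∈ ℝ^16, Σ_{i=0}^{8} (2⟨S_iX, Y⟩S_iX + ⟨S_iX, X⟩S_iY) = ‖X‖²Y + 2⟨X, Y⟩X. -/
abbrev E16 := EuclideanSpace ℝ (Fin 16)

/-!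
The products `S_s = ∏_{i ∈ s} Sᵢ` over the even subsets `s ⊆ {0, …, 8}` are orthogonal for the
trace form `(A, B) ↦ tr (A* B)`, and there are `2⁸ = 16²` of them, so they form a basis of
`End ℝ¹⁶`. In this basis the rank-one operator `P = x xᵀ` reads `16 P = ∑ₛ ⟨S_s x, x⟩ S_s`, and the
operator `L A = ∑ᵢ Sᵢ A Sᵢ` acts on `S_s` by the scalar `9 - 2|s|`. Pairing `Lᵏ P` with `x` for
`k = 0, 1, 2` gives `‖x‖⁴`, `q = ∑ᵢ ⟨Sᵢx, x⟩²` and `9‖x‖⁴`, while the polynomial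
`(λ - 1)(λ + 7)` kills every term `s ≠ ∅` (for `|s| ≡ 2 mod 4` because `S_s` is skew); hence
`q = ‖x‖⁴`. As the `Sᵢx` are pairwise orthogonal of norm `‖x‖`, this is the equality case of
Bessel's inequality: `∑ᵢ ⟨Sᵢx, x⟩ Sᵢx = ‖x‖² x`. The last identity is its polarization.
-/

structure IsCliffordFamily {ι A : Type*} [Ring A] (S : ι → A) : Prop where
  mul_self : ∀ i, S i * S i = 1
  anticomm : ∀ ⦃i j⦄, i ≠ j → S i * S j = -(S j * S i)

theorem IsCliffordFamily.of_anticommutator {ι K A : Type*} [DecidableEq ι] [Field K] [CharZero K]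
    [Ring A] [Module K A] {S : ι → A}
    (h : ∀ i j, S i * S j + S j * S i = if i = j then (2 : K) • (1 : A) else 0) :
    IsCliffordFamily S where
  mul_self i := by
    have h2 : (2 : K) • (S i * S i) = (2 : K) • 1 := by simpa [two_smul] using h i i
    exact smul_right_injective A two_ne_zero h2
  anticomm i j hij := eq_neg_of_add_eq_zero_left (by simpa [hij] using h i j)

/-- The order of `s.toList` is arbitrary: another order only changes the sign. -/
noncomputable def cliffordMonomial {ι A : Type*} [Ring A] (S : ι → A) (s : Finset ι) : A :=
  (s.toList.map S).prod

abbrev EvenFinset (ι : Type*) := {s : Finset ι // Even s.card}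

@[simp]
theorem cliffordMonomial_empty {ι A : Type*} [Ring A] (S : ι → A) : cliffordMonomial S ∅ = 1 := by
  simp [cliffordMonomial]

namespace IsCliffordFamily

section Ring

variable {ι A : Type*} [Ring A] {S : ι → A} (hS : IsCliffordFamily S)
include hS

/-- The exponent has the parity of the number of factors different from `S i`. -/
theorem mul_prod_map [DecidableEq ι] (i : ι) (l : List ι) :
    S i * (l.map S).prod = (-1 : ℤ) ^ (l.length + l.count i) • ((l.map S).prod * S i) := by
  induction l with
  | nil => simp
  | cons a t ih =>
    rw [List.map_cons, List.prod_cons, List.length_cons]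
    by_cases hai : a = i
    · subst hai
      have hconj : S a * (t.map S).prod * S a =
          (-1 : ℤ) ^ (t.length + t.count a) • (t.map S).prod := by
        rw [ih, smul_mul_assoc, mul_assoc, hS.mul_self, mul_one]
      rw [List.count_cons_self, ← mul_assoc, hS.mul_self, one_mul, hconj, smul_smul,
        ← pow_add, Even.neg_one_pow ⟨t.length + t.count a + 1, by ring⟩, one_smul]
    · rw [List.count_cons_of_ne hai, ← mul_assoc, hS.anticomm (Ne.symm hai), neg_mul, mul_assoc,
        ih, mul_smul_comm, add_right_comm, pow_succ, mul_neg_one, neg_smul, mul_assoc]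

theorem conj_prod_map [DecidableEq ι] (i : ι) (l : List ι) :
    S i * (l.map S).prod * S i = (-1 : ℤ) ^ (l.length + l.count i) • (l.map S).prod := by
  rw [hS.mul_prod_map, smul_mul_assoc, mul_assoc, hS.mul_self, mul_one]

theorem prod_map_mul_prod_map_reverse (l : List ι) :
    (l.map S).prod * (l.reverse.map S).prod = 1 := by
  induction l with
  | nil => simp
  | cons a t ih =>
    simp only [List.map_cons, List.prod_cons, List.reverse_cons, List.map_append,
      List.prod_append, List.map_nil, List.prod_nil, mul_one]
    rw [mul_assoc, ← mul_assoc (t.map S).prod, ih, one_mul, hS.mul_self]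

theorem prod_map_reverse_of_nodup {l : List ι} (hl : l.Nodup) :
    (l.reverse.map S).prod = (-1 : ℤ) ^ l.length.choose 2 • (l.map S).prod := by
  classical
  induction l with
  | nil => simp
  | cons a t ih =>
    obtain ⟨hat, ht⟩ := List.nodup_cons.mp hl
    have hmove := hS.mul_prod_map a t
    rw [List.count_eq_zero_of_not_mem hat, add_zero] at hmove
    simp only [List.reverse_cons, List.map_append, List.prod_append, List.map_cons,
      List.map_nil, List.prod_cons, List.prod_nil, mul_one, ih ht, smul_mul_assoc,
      List.length_cons]
    rw [hmove, smul_smul, ← pow_add, Nat.choose_succ_succ, Nat.choose_one_right,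
      show t.length + t.length.choose 2 + t.length = t.length.choose 2 + 2 * t.length by ring,
      pow_add, pow_mul, neg_one_sq, one_pow, mul_one]

theorem conj_cliffordMonomial [DecidableEq ι] {s : Finset ι} (hs : Even s.card) (i : ι) :
    S i * cliffordMonomial S s * S i =
      if i ∈ s then -cliffordMonomial S s else cliffordMonomial S s := by
  rw [cliffordMonomial, hS.conj_prod_map, Finset.length_toList]
  split_ifs with hi
  · rw [List.count_eq_one_of_mem s.nodup_toList (Finset.mem_toList.mpr hi),
      (hs.add_one).neg_one_pow, neg_one_zsmul]
  · rw [List.count_eq_zero_of_not_mem (mt Finset.mem_toList.mp hi), add_zero, hs.neg_one_pow,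
      one_smul]

end Ring

end IsCliffordFamily

theorem LinearMap.trace_eq_zero_of_conj_eq_neg {K V : Type*} [Field K] [CharZero K]
    [AddCommGroup V] [Module K V] [FiniteDimensional K V] {u f : Module.End K V}
    (hu : u * u = 1) (hf : u * f * u = -f) : trace K V f = 0 := by
  have h : trace K V f = trace K V (u * f * u) := by
    rw [trace_mul_comm, ← mul_assoc, hu, one_mul]
  rwa [hf, map_neg, self_eq_neg] at h

theorem LinearMap.trace_mul_smulRight {K M : Type*} [CommRing K] [AddCommGroup M] [Module K M]
    [Module.Free K M] [Module.Finite K M] (U : Module.End K M) (f : M →ₗ[K] K) (x : M) :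
    trace K M (U * f.smulRight x) = f (U x) := by
  have h : U * f.smulRight x = f.smulRight (U x) := by ext; simp
  rw [h, trace_smulRight]

namespace IsCliffordFamily

variable {ι K V : Type*} [Field K] [CharZero K] [AddCommGroup V] [Module K V]
  [FiniteDimensional K V] {S : ι → Module.End K V} (hS : IsCliffordFamily S)
include hS

theorem trace_cliffordMonomial_mul_of_ne {s t : Finset ι} (hs : Even s.card) (ht : Even t.card)
    (hst : s ≠ t) : LinearMap.trace K V (cliffordMonomial S s * cliffordMonomial S t) = 0 := by
  classical
  obtain ⟨i, hi⟩ : ∃ i, ¬(i ∈ s ↔ i ∈ t) := by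
    by_contra! h
    exact hst (Finset.ext h)
  refine LinearMap.trace_eq_zero_of_conj_eq_neg (hS.mul_self i) ?_
  have hsplit : S i * (cliffordMonomial S s * cliffordMonomial S t) * S i =
      (S i * cliffordMonomial S s * S i) * (S i * cliffordMonomial S t * S i) := by
    simp only [mul_assoc, ← mul_assoc (S i) (S i), hS.mul_self, one_mul]
  rw [hsplit, hS.conj_cliffordMonomial hs, hS.conj_cliffordMonomial ht]
  by_cases his : i ∈ s <;> by_cases hit : i ∈ t <;> simp_all

end IsCliffordFamily

noncomputable def cliffordCasimir (K : Type*) {ι A : Type*} [CommRing K] [Ring A] [Algebra K A]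
    [Fintype ι] (S : ι → A) : Module.End K A :=
  ∑ i, LinearMap.mulLeft K (S i) * LinearMap.mulRight K (S i)

section Casimir

variable {K ι A : Type*} [CommRing K] [Ring A] [Algebra K A] [Fintype ι] {S : ι → A}

theorem cliffordCasimir_apply (U : A) : cliffordCasimir K S U = ∑ i, S i * U * S i := by
  simp [cliffordCasimir, mul_assoc]

theorem IsCliffordFamily.cliffordCasimir_cliffordMonomial [DecidableEq ι]
    (hS : IsCliffordFamily S) {s : Finset ι} (hs : Even s.card) :
    cliffordCasimir K S (cliffordMonomial S s) =
      ((Fintype.card ι : K) - 2 * s.card) • cliffordMonomial S s := by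
  rw [cliffordCasimir_apply]
  simp_rw [hS.conj_cliffordMonomial hs]
  rw [Finset.sum_ite, Finset.sum_const, Finset.sum_const, Finset.filter_univ_mem,
    Finset.filter_not, Finset.filter_univ_mem, Finset.card_sdiff_of_subset s.subset_univ,
    Finset.card_univ, ← Nat.cast_smul_eq_nsmul K, ← Nat.cast_smul_eq_nsmul K,
    Nat.cast_sub (Finset.card_le_univ s)]
  module

end Casimir

section InnerProductSpace

open LinearMap Module

variable {ι V : Type*} [NormedAddCommGroup V] [InnerProductSpace ℝ V] {S : ι → Module.End ℝ V}

theorem inner_cliffordCasimir_smulRight_apply_self [Fintype ι] (x : V) :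
    inner ℝ (cliffordCasimir ℝ S ((innerₗ V x).smulRight x) x) x =
      ∑ i, inner ℝ (S i x) x ^ 2 := by
  simp only [cliffordCasimir_apply, LinearMap.sum_apply, Module.End.mul_apply, smulRight_apply,
    innerₗ_apply_apply, map_smul, sum_inner, real_inner_smul_left]
  exact Finset.sum_congr rfl fun i _ => by rw [real_inner_comm, sq]

variable [FiniteDimensional ℝ V]

theorem adjoint_prod_map (hsymm : ∀ i, adjoint (S i) = S i) (l : List ι) :
    adjoint (l.map S).prod = (l.reverse.map S).prod := by
  induction l with
  | nil => exact adjoint_id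
  | cons a t ih =>
    rw [List.map_cons, List.prod_cons, Module.End.mul_eq_comp, adjoint_comp, ih, hsymm,
      List.reverse_cons, List.map_append, List.prod_append]
    simp [Module.End.mul_eq_comp]

namespace IsCliffordFamily

variable (hS : IsCliffordFamily S) (hsymm : ∀ i, adjoint (S i) = S i)
include hS hsymm

theorem adjoint_cliffordMonomial_mul_self (s : Finset ι) :
    adjoint (cliffordMonomial S s) * cliffordMonomial S s = 1 := by
  rw [cliffordMonomial, adjoint_prod_map hsymm]
  simpa using hS.prod_map_mul_prod_map_reverse s.toList.reverse

theorem adjoint_cliffordMonomial (s : Finset ι) :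
    adjoint (cliffordMonomial S s) = (-1 : ℤ) ^ s.card.choose 2 • cliffordMonomial S s := by
  rw [cliffordMonomial, adjoint_prod_map hsymm, hS.prod_map_reverse_of_nodup s.nodup_toList,
    Finset.length_toList]

theorem inner_cliffordMonomial_apply_self_eq_zero {s : Finset ι} (hs : Odd (s.card.choose 2))
    (x : V) : inner ℝ (cliffordMonomial S s x) x = 0 := by
  have h := adjoint_inner_left (cliffordMonomial S s) x x
  rw [hS.adjoint_cliffordMonomial hsymm, hs.neg_one_pow, neg_one_zsmul, LinearMap.neg_apply,
    inner_neg_left, real_inner_comm] at h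
  rw [real_inner_comm]
  linarith

theorem trace_adjoint_cliffordMonomial_mul [DecidableEq ι] (s t : EvenFinset ι) :
    trace ℝ V (adjoint (cliffordMonomial S s.1) * cliffordMonomial S t.1) =
      if s = t then (finrank ℝ V : ℝ) else 0 := by
  split_ifs with hst
  · rw [hst, hS.adjoint_cliffordMonomial_mul_self hsymm, trace_one]
  · rw [hS.adjoint_cliffordMonomial hsymm, smul_mul_assoc, map_zsmul,
      hS.trace_cliffordMonomial_mul_of_ne s.2 t.2 (mt Subtype.ext hst), smul_zero]

theorem linearIndependent_cliffordMonomial [Nontrivial V] :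
    LinearIndependent ℝ (fun s : EvenFinset ι => cliffordMonomial S s.1) := by
  classical
  rw [linearIndependent_iff']
  intro u g hg t ht
  have h := congrArg (fun T => trace ℝ V (adjoint (cliffordMonomial S t.1) * T)) hg
  simp only [Finset.mul_sum, mul_smul_comm, map_sum, map_smul,
    hS.trace_adjoint_cliffordMonomial_mul hsymm, smul_eq_mul, mul_ite, mul_zero, Finset.sum_ite_eq,
    if_pos ht, map_zero] at h
  exact (mul_eq_zero.mp h).resolve_right (Nat.cast_ne_zero.mpr finrank_pos.ne')

theorem smul_eq_sum_cliffordMonomial [Fintype ι]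
    (hcard : Fintype.card (EvenFinset ι) = finrank ℝ V * finrank ℝ V)
    (T : Module.End ℝ V) :
    (finrank ℝ V : ℝ) • T = ∑ s : EvenFinset ι,
      trace ℝ V (adjoint (cliffordMonomial S s.1) * T) • cliffordMonomial S s.1 := by
  classical
  have : Nonempty (EvenFinset ι) := ⟨⟨∅, by simp⟩⟩
  have : Nontrivial V := nontrivial_of_finrank_pos <| Nat.pos_of_ne_zero fun h =>
    Fintype.card_pos.ne' (by rw [hcard, h, zero_mul])
  have hspan := (hS.linearIndependent_cliffordMonomial hsymm).span_eq_top_of_card_eq_finrank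
    (by rw [hcard, finrank_linearMap])
  have hT : T ∈ Submodule.span ℝ (Set.range fun s : EvenFinset ι =>
      cliffordMonomial S s.1) := hspan ▸ Submodule.mem_top
  obtain ⟨c, rfl⟩ := (Submodule.mem_span_range_iff_exists_fun ℝ).mp hT
  simp only [Finset.mul_sum, mul_smul_comm, map_sum, map_smul,
    hS.trace_adjoint_cliffordMonomial_mul hsymm, smul_eq_mul, mul_ite, mul_zero, Finset.sum_ite_eq,
    Finset.mem_univ, if_true, Finset.smul_sum, smul_smul, mul_comm]

theorem inner_apply_apply [DecidableEq ι] (i j : ι) (x : V) :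
    inner ℝ (S i x) (S j x) = if i = j then ‖x‖ ^ 2 else 0 := by
  have hswap (k : ι) (y z : V) : inner ℝ (S k y) z = inner ℝ y (S k z) := by
    rw [← adjoint_inner_right, hsymm]
  split_ifs with hij
  · rw [hij, hswap, ← Module.End.mul_apply, hS.mul_self, Module.End.one_apply,
      real_inner_self_eq_norm_sq]
  · have h : inner ℝ (S i x) (S j x) = -inner ℝ (S i x) (S j x) :=
      calc inner ℝ (S i x) (S j x) = inner ℝ x ((S i * S j) x) := hswap _ _ _
        _ = -inner ℝ x ((S j * S i) x) := by
          rw [hS.anticomm hij, LinearMap.neg_apply, inner_neg_right]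
        _ = -inner ℝ (S i x) (S j x) := by
          rw [Module.End.mul_apply, ← hswap, real_inner_comm]
    linarith

theorem finrank_mul_inner_cliffordCasimir_pow_apply [Fintype ι]
    (hcard : Fintype.card (EvenFinset ι) = finrank ℝ V * finrank ℝ V)
    (x : V) (k : ℕ) :
    finrank ℝ V * inner ℝ ((cliffordCasimir ℝ S ^ k) ((innerₗ V x).smulRight x) x) x =
      ∑ s : EvenFinset ι, inner ℝ (cliffordMonomial S s.1 x) x ^ 2 *
        ((Fintype.card ι : ℝ) - 2 * s.1.card) ^ k := by
  classical
  have hexpand := hS.smul_eq_sum_cliffordMonomial hsymm hcard ((innerₗ V x).smulRight x)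
  simp only [trace_mul_smulRight, innerₗ_apply_apply, adjoint_inner_right] at hexpand
  have heigen (s : EvenFinset ι) :
      (cliffordCasimir ℝ S ^ k) (cliffordMonomial S s.1) =
        ((Fintype.card ι : ℝ) - 2 * s.1.card) ^ k • cliffordMonomial S s.1 := by
    induction k with
    | zero => simp
    | succ k ih => rw [pow_succ', Module.End.mul_apply, ih, map_smul,
        hS.cliffordCasimir_cliffordMonomial s.2, smul_smul, pow_succ]
  rw [← real_inner_smul_left, ← LinearMap.smul_apply, ← map_smul, hexpand, map_sum]
  simp only [map_smul, heigen, smul_smul, LinearMap.sum_apply, LinearMap.smul_apply, sum_inner,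
    real_inner_smul_left]
  exact Finset.sum_congr rfl fun s _ => by ring

theorem inner_cliffordCasimir_sq_smulRight_apply_self [Fintype ι] (x : V) :
    inner ℝ ((cliffordCasimir ℝ S ^ 2) ((innerₗ V x).smulRight x) x) x =
      Fintype.card ι * ‖x‖ ^ 4 := by
  classical
  have hsym (i : ι) : (S i).IsSymmetric := (isSymmetric_iff_isSelfAdjoint (S i)).mpr (hsymm i)
  have hterm (i j : ι) : inner ℝ x (S j (S i x)) * inner ℝ (S i (S j x)) x =
      if i = j then ‖x‖ ^ 4 else 0 := by
    rw [← hsym, hsym i, hS.inner_apply_apply hsymm]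
    by_cases hij : i = j
    · simp only [hij, if_true]; ring
    · simp [hij, Ne.symm hij]
  simp only [sq, Module.End.mul_apply, cliffordCasimir_apply, LinearMap.sum_apply,
    Module.End.mul_apply, smulRight_apply, innerₗ_apply_apply, map_smul, map_sum, sum_inner,
    real_inner_smul_left, hterm, Finset.sum_ite_eq', Finset.mem_univ, if_true, Finset.sum_const,
    Finset.card_univ, nsmul_eq_mul]

end IsCliffordFamily

end InnerProductSpace

section NineOnSixteen

open LinearMap Module

variable {V : Type*} [NormedAddCommGroup V] [InnerProductSpace ℝ V] [FiniteDimensional ℝ V]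
  {S : Fin 9 → Module.End ℝ V}

namespace IsCliffordFamily

variable (hS : IsCliffordFamily S) (hsymm : ∀ i, adjoint (S i) = S i)
include hS hsymm

theorem sq_inner_cliffordMonomial_mul_eq_ite {s : Finset (Fin 9)}
    (hs : Even s.card) (x : V) :
    inner ℝ (cliffordMonomial S s x) x ^ 2 *
      ((9 - 2 * s.card) ^ 2 + 6 * (9 - 2 * s.card) - 7) = if s = ∅ then 128 * ‖x‖ ^ 4 else 0 := by
  have hcard : s.card ≤ 9 := by simpa using s.card_le_univ
  obtain ⟨m, hm⟩ := hs
  have hskew (hodd : Odd (s.card.choose 2)) : inner ℝ (cliffordMonomial S s x) x = 0 :=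
    hS.inner_cliffordMonomial_apply_self_eq_zero hsymm hodd x
  split_ifs with hempty
  · subst hempty
    simp only [cliffordMonomial_empty, Module.End.one_apply, real_inner_self_eq_norm_sq,
      Finset.card_empty]
    ring
  · have hm0 : m ≠ 0 := by
      rintro rfl
      exact hempty (Finset.card_eq_zero.mp hm)
    have : m = 1 ∨ m = 2 ∨ m = 3 ∨ m = 4 := by omega
    rcases this with rfl | rfl | rfl | rfl <;> simp only [hm] at hskew ⊢
    · rw [hskew (by decide)]; ring
    · norm_num
    · rw [hskew (by decide)]; ring
    · norm_num

theorem sum_sq_inner_apply_self (hV : finrank ℝ V = 16) (x : V) :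
    ∑ i, inner ℝ (S i x) x ^ 2 = ‖x‖ ^ 4 := by
  have hcard : Fintype.card (EvenFinset (Fin 9)) = finrank ℝ V * finrank ℝ V := by
    rw [hV, Fintype.card_subtype]
    set_option maxRecDepth 10000 in decide
  have hpow (k : ℕ) := hS.finrank_mul_inner_cliffordCasimir_pow_apply hsymm hcard x k
  simp only [Fintype.card_fin, Nat.cast_ofNat, hV] at hpow
  have h0 := hpow 0
  have h1 := hpow 1
  have h2 := hpow 2
  rw [pow_zero, Module.End.one_apply, smulRight_apply, innerₗ_apply_apply, real_inner_smul_left,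
    real_inner_self_eq_norm_sq] at h0
  rw [pow_one, inner_cliffordCasimir_smulRight_apply_self] at h1
  rw [hS.inner_cliffordCasimir_sq_smulRight_apply_self hsymm, Fintype.card_fin] at h2
  have hsum : ∑ s : EvenFinset (Fin 9), inner ℝ (cliffordMonomial S s.1 x) x ^ 2 *
      ((9 - 2 * s.1.card) ^ 2 + 6 * (9 - 2 * s.1.card) ^ 1 - 7 * (9 - 2 * s.1.card) ^ 0) =
      128 * ‖x‖ ^ 4 := by
    rw [Finset.sum_eq_single ⟨∅, by simp⟩ (fun s _ hs => ?_) (by simp)]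
    · simpa using hS.sq_inner_cliffordMonomial_mul_eq_ite hsymm (s := ∅) (by simp) x
    · rw [pow_one, pow_zero, mul_one, hS.sq_inner_cliffordMonomial_mul_eq_ite hsymm s.2 x,
        if_neg fun h => hs (Subtype.ext h)]
  simp only [mul_add, mul_sub, Finset.sum_add_distrib, Finset.sum_sub_distrib,
    mul_left_comm _ (6 : ℝ), mul_left_comm _ (7 : ℝ), ← Finset.mul_sum] at hsum
  rw [Nat.cast_ofNat] at h2
  linear_combination (hsum + h2 + 6 * h1 - 7 * h0) / 96

theorem sum_inner_smul_apply_self (hV : finrank ℝ V = 16) (x : V) :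
    ∑ i, inner ℝ (S i x) x • S i x = ‖x‖ ^ 2 • x := by
  classical
  set L := ∑ i, inner ℝ (S i x) x • S i x
  have hq := hS.sum_sq_inner_apply_self hsymm hV x
  have hLL : inner ℝ L L = ‖x‖ ^ 2 * ∑ i, inner ℝ (S i x) x ^ 2 := by
    simp only [L, sum_inner, inner_sum, real_inner_smul_left, real_inner_smul_right,
      hS.inner_apply_apply hsymm, mul_ite, mul_zero, Finset.sum_ite_eq', Finset.mem_univ, if_true,
      Finset.mul_sum]
    exact Finset.sum_congr rfl fun i _ => by ring
  have hLx : inner ℝ L x = ∑ i, inner ℝ (S i x) x ^ 2 := by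
    simp only [L, sum_inner, real_inner_smul_left, sq]
  have hdist : ‖L - ‖x‖ ^ 2 • x‖ ^ 2 = 0 := by
    rw [norm_sub_sq_real, ← real_inner_self_eq_norm_sq L, hLL, real_inner_smul_right, hLx, hq,
      norm_smul, Real.norm_of_nonneg (sq_nonneg _)]
    ring
  exact sub_eq_zero.mp (norm_eq_zero.mp (pow_eq_zero_iff two_ne_zero |>.mp hdist))

theorem mem_span_range_apply (hV : finrank ℝ V = 16) (x : V) :
    x ∈ Submodule.span ℝ (Set.range fun i => S i x) := by
  rcases eq_or_ne x 0 with rfl | hx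
  · exact Submodule.zero_mem _
  have hx2 : ‖x‖ ^ 2 ≠ 0 := by positivity
  have hmem : (‖x‖ ^ 2)⁻¹ • ∑ i, inner ℝ (S i x) x • S i x ∈
      Submodule.span ℝ (Set.range fun i => S i x) :=
    Submodule.smul_mem _ _ <| Submodule.sum_mem _ fun i _ =>
      Submodule.smul_mem _ _ (Submodule.subset_span ⟨i, rfl⟩)
  rwa [hS.sum_inner_smul_apply_self hsymm hV, inv_smul_smul₀ hx2] at hmem

theorem sum_inner_smul_apply_polarized (hV : finrank ℝ V = 16) (x y : V) :
    ∑ i, ((2 * inner ℝ (S i x) y) • S i x + inner ℝ (S i x) x • S i y) =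
      ‖x‖ ^ 2 • y + (2 * inner ℝ x y) • x := by
  have hsym (i : Fin 9) : (S i).IsSymmetric := (isSymmetric_iff_isSelfAdjoint (S i)).mpr (hsymm i)
  have hcubic (i : Fin 9) :
      inner ℝ (S i (x + y)) (x + y) • S i (x + y) - inner ℝ (S i (x - y)) (x - y) • S i (x - y) -
        (2 : ℝ) • (inner ℝ (S i y) y • S i y) =
      (2 : ℝ) • ((2 * inner ℝ (S i x) y) • S i x + inner ℝ (S i x) x • S i y) := by
    have hyx : inner ℝ (S i y) x = inner ℝ (S i x) y := by rw [hsym, real_inner_comm]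
    simp only [map_add, map_sub, inner_add_left, inner_add_right, inner_sub_left,
      inner_sub_right, hyx]
    module
  have h := Finset.sum_congr rfl fun i (_ : i ∈ Finset.univ) => hcubic i
  rw [Finset.sum_sub_distrib, Finset.sum_sub_distrib, ← Finset.smul_sum, ← Finset.smul_sum,
    hS.sum_inner_smul_apply_self hsymm hV, hS.sum_inner_smul_apply_self hsymm hV,
    hS.sum_inner_smul_apply_self hsymm hV, norm_add_sq_real, norm_sub_sq_real] at h
  refine smul_right_injective V (two_ne_zero (α := ℝ)) (h.symm.trans ?_)
  module

end IsCliffordFamily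

end NineOnSixteen

/-- Lemma 3(4), first part: for a `Cl⁺(9)`-system on `ℝ¹⁶` and any `X, Y ∈ ℝ¹⁶`:
`X ∈ Span(S₀X,…,S₈X)`, `Σᵢ ⟨SᵢX,X⟩SᵢX = ‖X‖²X`, and
`Σᵢ (2⟨SᵢX,Y⟩SᵢX + ⟨SᵢX,X⟩SᵢY) = ‖X‖²Y + 2⟨X,Y⟩X`. -/
theorem stmt11 (S : Fin 9 → (E16 →ₗ[ℝ] E16))
    (hsymm : ∀ i, LinearMap.adjoint (S i) = S i)
    (hcl : ∀ i j, S i * S j + S j * S i =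
      if i = j then (2 : ℝ) • (1 : E16 →ₗ[ℝ] E16) else 0) :
    (∀ X : E16, X ∈ Submodule.span ℝ (Set.range fun i => S i X)) ∧
    (∀ X : E16, ∑ i, (inner ℝ (S i X) X : ℝ) • S i X = (‖X‖ ^ 2 : ℝ) • X) ∧
    (∀ X Y : E16, ∑ i, ((2 * (inner ℝ (S i X) Y : ℝ)) • S i X + (inner ℝ (S i X) X : ℝ) • S i Y)
      = (‖X‖ ^ 2 : ℝ) • Y + (2 * (inner ℝ X Y : ℝ)) • X) := by
  have hS : IsCliffordFamily S := .of_anticommutator hcl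
  have hV : Module.finrank ℝ E16 = 16 := finrank_euclideanSpace_fin
  exact ⟨hS.mem_span_range_apply hsymm hV, hS.sum_inner_smul_apply_self hsymm hV,
    hS.sum_inner_smul_apply_polarized hsymm hV⟩
end

section
/- Let S_0, …, S_8 be a Cl⁺(9)-system on ℝ^16, and let N : ℝ^16 × ℝ^16 → ℝ^16 be a bilinear skew-symmetric map such that ⟨N(X,Y), Z⟩ = 0 whenever w ∈ ℝ^9 is nonzero and X, Y, Z all belong to the ‖w‖-eigenspace of S_w. Then there exists q ∈ ℝ^16 such that for all X, Y: N(X,Y) = Σ_{i=0}^{8} (⟨S_iX, q⟩S_iY − ⟨S_iY, q⟩S_iX) − (⟨X, q⟩Y − ⟨Y, q⟩X). -/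
open Finset Module LinearMap
open scoped RealInnerProductSpace

structure IsCliffordFamily_s13 {ι R : Type*} [Ring R] (e : ι → R) : Prop where
  mul_self : ∀ i, e i * e i = 1
  anticomm : ∀ i j, i ≠ j → e i * e j = -(e j * e i)

def cliffordWord {ι R : Type*} [Monoid R] (e : ι → R) (l : List ι) : R := (l.map e).prod

section Monoid

variable {ι R : Type*} [Monoid R] (e : ι → R)

@[simp] lemma cliffordWord_nil : cliffordWord e [] = 1 := rfl

@[simp] lemma cliffordWord_cons (a : ι) (l : List ι) :
    cliffordWord e (a :: l) = e a * cliffordWord e l := by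
  simp [cliffordWord]

@[simp] lemma cliffordWord_append (l₁ l₂ : List ι) :
    cliffordWord e (l₁ ++ l₂) = cliffordWord e l₁ * cliffordWord e l₂ := by
  simp [cliffordWord]

end Monoid

namespace IsCliffordFamily_s13

section Ring

variable {ι R : Type*} [Ring R] {e : ι → R}

lemma of_mul_add_mul {K : Type*} [Field K] [CharZero K] [Module K R] [DecidableEq ι]
    (h : ∀ i j, e i * e j + e j * e i = if i = j then (2 : K) • (1 : R) else 0) :
    IsCliffordFamily_s13 e where
  mul_self i := by
    have hi := h i i
    rw [if_pos rfl, ← two_smul K] at hi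
    exact smul_right_injective R two_ne_zero hi
  anticomm i j hij := eq_neg_of_add_eq_zero_left (by simpa [hij] using h i j)

lemma mul_mul_self_of_ne (he : IsCliffordFamily_s13 e) {i j : ι} (h : i ≠ j) :
    e i * e j * e i = -e j := by
  rw [he.anticomm i j h, neg_mul, mul_assoc, he.mul_self, mul_one]

lemma mul_mul_mul_self (he : IsCliffordFamily_s13 e) {i j : ι} (h : i ≠ j) :
    e i * e j * (e i * e j) = -1 := by
  rw [← mul_assoc, he.mul_mul_self_of_ne h, neg_mul, he.mul_self]

lemma commute_mul_of_ne (he : IsCliffordFamily_s13 e) {a b m : ι} (hma : m ≠ a) (hmb : m ≠ b) :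
    Commute (e m) (e a * e b) := by
  rw [Commute, SemiconjBy, ← mul_assoc, he.anticomm m a hma, neg_mul, mul_assoc,
    he.anticomm m b hmb, mul_neg, neg_neg, mul_assoc]

lemma cliffordWord_reverse_mul_self (he : IsCliffordFamily_s13 e) (l : List ι) :
    cliffordWord e l.reverse * cliffordWord e l = 1 := by
  induction l with
  | nil => simp
  | cons a l ih =>
    simp only [List.reverse_cons, cliffordWord_append, cliffordWord_cons, cliffordWord_nil,
      mul_one]
    rw [mul_assoc, ← mul_assoc (e a), he.mul_self, one_mul, ih]

variable [DecidableEq ι]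

lemma mul_cliffordWord (he : IsCliffordFamily_s13 e) (x : ι) (l : List ι) :
    e x * cliffordWord e l = (-1 : ℤ) ^ (l.length + l.count x) • (cliffordWord e l * e x) := by
  induction l with
  | nil => simp
  | cons a l ih =>
    rw [cliffordWord_cons, ← mul_assoc]
    by_cases hxa : a = x
    · subst hxa
      rw [he.mul_self, one_mul, ih, smul_mul_assoc, mul_assoc, he.mul_self, mul_one,
        smul_smul, ← pow_add, List.length_cons, List.count_cons_self,
        Even.neg_one_pow ⟨l.length + l.count a + 1, by ring⟩, one_smul]
    · rw [he.anticomm x a (Ne.symm hxa), neg_mul, mul_assoc, ih, mul_smul_comm, ← mul_assoc,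
        List.length_cons, List.count_cons_of_ne hxa, add_right_comm, pow_succ, mul_neg_one,
        neg_smul]

lemma cliffordWord_mul (he : IsCliffordFamily_s13 e) (x : ι) (l : List ι) :
    cliffordWord e l * e x = (-1 : ℤ) ^ (l.length + l.count x) • (e x * cliffordWord e l) := by
  rw [he.mul_cliffordWord, smul_smul, ← pow_add, Even.neg_one_pow ⟨_, rfl⟩, one_smul]

lemma conj_cliffordWord (he : IsCliffordFamily_s13 e) (x : ι) (l : List ι) :
    e x * cliffordWord e l * e x = (-1 : ℤ) ^ (l.length + l.count x) • cliffordWord e l := by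
  rw [he.mul_cliffordWord, smul_mul_assoc, mul_assoc, he.mul_self, mul_one]

lemma cliffordWord_reverse (he : IsCliffordFamily_s13 e) {l : List ι} (hl : l.Nodup) :
    cliffordWord e l.reverse = (-1 : ℤ) ^ l.length.choose 2 • cliffordWord e l := by
  induction l with
  | nil => simp
  | cons a l ih =>
    rw [List.nodup_cons] at hl
    rw [List.reverse_cons, cliffordWord_append, ih hl.2, smul_mul_assoc]
    simp only [cliffordWord_cons, cliffordWord_nil, mul_one]
    rw [he.cliffordWord_mul, List.count_eq_zero_of_not_mem hl.1, smul_smul, ← pow_add,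
      List.length_cons, Nat.choose_succ_succ', Nat.choose_one_right, add_zero, add_comm]

lemma sum_conj_cliffordWord [Fintype ι] (he : IsCliffordFamily_s13 e) {l : List ι} (hl : l.Nodup) :
    ∑ x, e x * cliffordWord e l * e x =
      ((-1 : ℤ) ^ l.length * (Fintype.card ι - 2 * l.length)) • cliffordWord e l := by
  have hcount (x : ι) : (-1 : ℤ) ^ l.count x = 1 - 2 * if x ∈ l.toFinset then 1 else 0 := by
    by_cases hx : x ∈ l
    · simp [List.count_eq_one_of_mem hl hx, hx]
    · simp [List.count_eq_zero_of_not_mem hx, hx]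
  simp_rw [he.conj_cliffordWord, ← Finset.sum_smul, pow_add, ← Finset.mul_sum, hcount,
    Finset.sum_sub_distrib, ← Finset.mul_sum, Finset.sum_boole]
  rw [Finset.filter_mem_eq_inter, Finset.univ_inter, List.toFinset_card_of_nodup hl]
  simp

end Ring

section Trace

variable {ι K V : Type*} [DecidableEq ι] [Field K] [CharZero K] [AddCommGroup V] [Module K V]
  {e : ι → Module.End K V}

lemma trace_cliffordWord_eq_zero (he : IsCliffordFamily_s13 e) {l : List ι} {x : ι}
    (hx : Odd (l.length + l.count x)) : LinearMap.trace K V (cliffordWord e l) = 0 := by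
  have hconj := he.conj_cliffordWord x l
  rw [hx.neg_one_pow, neg_one_zsmul] at hconj
  have htrace : LinearMap.trace K V (e x * cliffordWord e l * e x) =
      LinearMap.trace K V (cliffordWord e l) := by
    rw [LinearMap.trace_mul_comm, ← mul_assoc, he.mul_self, one_mul]
  rw [hconj, map_neg] at htrace
  exact neg_eq_self.mp htrace

variable [Fintype ι] [FiniteDimensional K V]

lemma trace_cliffordWord_reverse_mul (he : IsCliffordFamily_s13 e) {s t : Finset ι}
    (hst : #s + #t < Fintype.card ι) :
    LinearMap.trace K V (cliffordWord e s.toList.reverse * cliffordWord e t.toList) =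
      if s = t then (finrank K V : K) else 0 := by
  split_ifs with hst_eq
  · rw [hst_eq, he.cliffordWord_reverse_mul_self, LinearMap.trace_one]
  rw [← cliffordWord_append]
  have hcount (x : ι) : (s.toList.reverse ++ t.toList).count x =
      (if x ∈ s then 1 else 0) + if x ∈ t then 1 else 0 := by
    simp [List.count_append, (nodup_toList s).count, (nodup_toList t).count]
  -- conjugating by a generator in exactly one of `s`, `t` (or, for odd `#s + #t`, in neither)
  -- flips the sign of the word
  obtain ⟨x, hx⟩ : ∃ x, Odd (#s + #t + ((if x ∈ s then 1 else 0) + if x ∈ t then 1 else 0)) := by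
    rcases Nat.even_or_odd (#s + #t) with heven | hodd
    · obtain ⟨x, hx⟩ : ∃ x, ¬(x ∈ s ↔ x ∈ t) := by
        by_contra! h
        exact hst_eq (Finset.ext h)
      refine ⟨x, ?_⟩
      by_cases hs : x ∈ s <;> simp_all
    · obtain ⟨x, -, hx⟩ := exists_mem_notMem_of_card_lt_card (s := s ∪ t) (t := univ)
        ((card_union_le s t).trans_lt hst)
      exact ⟨x, by simp_all⟩
  exact he.trace_cliffordWord_eq_zero (x := x) (by simpa [hcount] using hx)

end Trace

end IsCliffordFamily_s13

lemma Fintype.card_finset_card_le {α : Type*} [Fintype α] (m : ℕ) :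
    Fintype.card {s : Finset α // #s ≤ m} = ∑ i ∈ range (m + 1), (Fintype.card α).choose i := by
  classical
  rw [Fintype.card_subtype, card_eq_sum_card_fiberwise (f := Finset.card) (t := range (m + 1))
    (fun s hs => by simpa [Nat.lt_succ_iff] using hs)]
  refine Finset.sum_congr rfl fun i hi ↦ ?_
  rw [filter_filter, ← Fintype.card_finset_len, Fintype.card_subtype]
  congr 1
  ext s
  simp only [mem_filter, mem_univ, true_and, and_iff_right_iff_imp]
  rintro rfl
  simpa [Nat.lt_succ_iff] using hi

namespace IsCliffordFamily_s13

variable {ι K V : Type*} [DecidableEq ι] [Fintype ι] [Field K] [CharZero K] [AddCommGroup V]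
  [Module K V] [FiniteDimensional K V] {e : ι → Module.End K V}

lemma linearIndependent_cliffordWord [Nontrivial V] (he : IsCliffordFamily_s13 e) {m : ℕ}
    (hm : 2 * m < Fintype.card ι) :
    LinearIndependent K fun s : {s : Finset ι // #s ≤ m} => cliffordWord e s.1.toList := by
  rw [Fintype.linearIndependent_iff]
  intro g hg s
  have htrace :=
    congrArg (fun A => LinearMap.trace K V (cliffordWord e s.1.toList.reverse * A)) hg
  simp only [mul_sum, mul_smul_comm, map_sum, map_smul, mul_zero, map_zero] at htrace
  have hpair (t : {s : Finset ι // #s ≤ m}) : g t • LinearMap.trace K V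
      (cliffordWord e s.1.toList.reverse * cliffordWord e t.1.toList) =
        if s = t then g s * finrank K V else 0 := by
    rw [he.trace_cliffordWord_reverse_mul (by have := s.2; have := t.2; omega)]
    by_cases h : s = t <;> simp [h, Subtype.coe_ne_coe]
  simp only [hpair, sum_ite_eq, mem_univ, if_true] at htrace
  exact (mul_eq_zero.mp htrace).resolve_right (by simpa using finrank_pos.ne')

theorem span_cliffordWord_eq_top (he : IsCliffordFamily_s13 e) {m : ℕ}
    (hι : Fintype.card ι = 2 * m + 1) (hV : finrank K V = 2 ^ m) :
    Submodule.span K (Set.range fun s : {s : Finset ι // #s ≤ m} => cliffordWord e s.1.toList) =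
      ⊤ := by
  have : Nontrivial V := finrank_pos_iff.mp (by rw [hV]; positivity)
  refine (he.linearIndependent_cliffordWord (by omega)).span_eq_top_of_card_eq_finrank' ?_
  change _ = finrank K (V →ₗ[K] V)
  rw [Fintype.card_finset_card_le, hι, Nat.sum_range_choose_halfway, finrank_linearMap, hV,
    ← mul_pow]
  norm_num

end IsCliffordFamily_s13

lemma exists_eq_of_symm_of_shift {ι X : Type*} [Nonempty X] (f : ι → ι → X)
    (hsymm : ∀ i j, i ≠ j → f j i = f i j)
    (hshift : ∀ i j m, i ≠ j → i ≠ m → j ≠ m → f j m = f i j) :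
    ∃ c, ∀ i j, i ≠ j → f i j = c := by
  by_cases h : ∃ i j : ι, i ≠ j
  · obtain ⟨i₀, j₀, h₀⟩ := h
    refine ⟨f i₀ j₀, fun k l hkl => ?_⟩
    by_cases hk : k = j₀
    · subst hk
      by_cases hl : l = i₀
      · subst hl; exact hsymm _ _ h₀
      · exact hshift i₀ k l h₀ (Ne.symm hl) hkl
    · have hk' : f k j₀ = f i₀ j₀ := by
        by_cases hki : k = i₀
        · rw [hki]
        · rw [hsymm j₀ k (Ne.symm hk)]; exact hshift i₀ j₀ k h₀ (Ne.symm hki) (Ne.symm hk)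
      by_cases hl : l = j₀
      · rwa [hl]
      · rw [← hk', hshift j₀ k l (Ne.symm hk) (Ne.symm hl) hkl, hsymm j₀ k (Ne.symm hk)]
  · push Not at h
    exact ⟨Classical.arbitrary X, fun i j hij => absurd (h i j) hij⟩

namespace IsCliffordFamily_s13

variable {ι K V : Type*} [Field K] [AddCommGroup V] [Module K V] {S : ι → Module.End K V}

lemma apply_apply_self (hS : IsCliffordFamily_s13 S) (i : ι) (v : V) : S i (S i v) = v := by
  rw [← Module.End.mul_apply, hS.mul_self, Module.End.one_apply]

variable [CharZero K] {u : Module.End K V →ₗ[K] V} (hS : IsCliffordFamily_s13 S)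
  (hu : ∀ m P, u P + u (S m * P * S m) + S m (u (P * S m)) + S m (u (S m * P)) = 0)
include hS hu

lemma map_mul_mul_mul_eq_neg {a b m : ι} (hma : m ≠ a) (hmb : m ≠ b) :
    u (S a * S b * S m) = -S m (u (S a * S b)) := by
  have hcomm := hS.commute_mul_of_ne hma hmb
  have hconj : S m * (S a * S b) * S m = S a * S b := by
    rw [hcomm.eq, mul_assoc, hS.mul_self, mul_one]
  have h : (2 : K) • (u (S a * S b) + S m (u (S a * S b * S m))) = 0 := by
    rw [← hu m (S a * S b), hconj, hcomm.eq]
    module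
  have h' := congrArg (S m)
    (eq_neg_of_add_eq_zero_right ((smul_eq_zero.mp h).resolve_left two_ne_zero))
  rwa [hS.apply_apply_self, map_neg] at h'

lemma mul_apply_map_mul_eq {i j m : ι} (hij : i ≠ j) (him : i ≠ m) (hjm : j ≠ m) :
    (S j * S m) (u (S j * S m)) = (S i * S j) (u (S i * S j)) := by
  have hcycle : S j * S m * S i = S i * S j * S m := by
    rw [mul_assoc, hS.anticomm m i (Ne.symm him), mul_neg, ← mul_assoc,
      hS.anticomm j i (Ne.symm hij), neg_mul, neg_neg]
  have hkey : u (S j * S m) = S i (S m (u (S i * S j))) := by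
    have h := hS.map_mul_mul_mul_eq_neg hu hij him
    rw [hcycle, hS.map_mul_mul_mul_eq_neg hu (Ne.symm him) (Ne.symm hjm), neg_inj] at h
    rw [h, hS.apply_apply_self]
  calc (S j * S m) (u (S j * S m)) = (S j * (S m * S i * S m)) (u (S i * S j)) := by
        rw [hkey]; rfl
    _ = (S i * S j) (u (S i * S j)) := by
        rw [hS.mul_mul_self_of_ne (Ne.symm him), mul_neg, hS.anticomm j i (Ne.symm hij)]
        simp

lemma exists_map_mul_eq : ∃ p : V, ∀ i j, i ≠ j → u (S i * S j) = (S i * S j) p := by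
  obtain ⟨c, hc⟩ := exists_eq_of_symm_of_shift (fun i j => -(S i * S j) (u (S i * S j)))
    (fun i j hij => by simp [hS.anticomm j i (Ne.symm hij)])
    (fun i j m hij him hjm => by simp [hS.mul_apply_map_mul_eq hu hij him hjm])
  refine ⟨c, fun i j hij => ?_⟩
  rw [← hc i j hij, map_neg, ← Module.End.mul_apply, hS.mul_mul_mul_self hij]
  simp

lemma exists_map_cliffordWord_eq : ∃ p : V, ∀ l : List ι, l.Nodup →
    (l.length = 2 ∨ l.length = 3) →
      u (cliffordWord S l) = (-1 : ℤ) ^ l.length • cliffordWord S l p := by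
  obtain ⟨p, hp⟩ := hS.exists_map_mul_eq hu
  refine ⟨p, fun l hl hlen => ?_⟩
  rcases hlen with hlen | hlen
  · obtain ⟨i, j, rfl⟩ := List.length_eq_two.mp hlen
    simpa using hp i j (by simpa using hl)
  · obtain ⟨i, j, m, rfl⟩ := List.length_eq_three.mp hlen
    simp only [List.nodup_cons, List.mem_cons, not_or, List.not_mem_nil,
      not_false_eq_true, List.nodup_nil, and_true] at hl
    obtain ⟨⟨hij, him⟩, hjm⟩ := hl
    have hword : cliffordWord S [i, j, m] = S i * S j * S m := by simp [mul_assoc]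
    rw [hword, hS.map_mul_mul_mul_eq_neg hu (Ne.symm him) (Ne.symm hjm), hp i j hij,
      ← Module.End.mul_apply, (hS.commute_mul_of_ne (Ne.symm him) (Ne.symm hjm)).eq]
    simp

end IsCliffordFamily_s13

section Contraction

variable {ι V : Type*} [Fintype ι] [NormedAddCommGroup V] [InnerProductSpace ℝ V]
  (b : OrthonormalBasis ι ℝ V)

noncomputable def contract : (V →ₗ[ℝ] V →ₗ[ℝ] V) →ₗ[ℝ] Module.End ℝ V →ₗ[ℝ] V :=
  LinearMap.mk₂ ℝ (fun N P => ∑ β, N (b β) (P (b β)))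
    (fun _ _ _ => by simp [sum_add_distrib]) (fun _ _ _ => by simp [smul_sum])
    (fun _ _ _ => by simp [sum_add_distrib]) (fun _ _ _ => by simp [smul_sum])

lemma contract_apply (N : V →ₗ[ℝ] V →ₗ[ℝ] V) (P : Module.End ℝ V) :
    contract b N P = ∑ β, N (b β) (P (b β)) := rfl

lemma sum_inner_smul_apply (A : Module.End ℝ V) (v : V) :
    ∑ β, ⟪b β, v⟫ • A (b β) = A v := by
  simp_rw [← map_smul, ← map_sum, b.sum_repr']

-- test the contraction against the rank-one maps `v ↦ ⟪x, v⟫ • y`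
lemma eq_zero_of_contract_eq_zero {κ : Type*} {w : κ → Module.End ℝ V}
    (hw : Submodule.span ℝ (Set.range w) = ⊤) {B : V →ₗ[ℝ] V →ₗ[ℝ] V}
    (hB : ∀ k, contract b B (w k) = 0) : B = 0 := by
  have h : contract b B = 0 := ext_on_range hw (by simpa using hB)
  ext x y
  calc B x y = ∑ β, ⟪b β, x⟫ • B (b β) y := by
        conv_lhs => rw [← b.sum_repr' x]
        simp [map_sum]
    _ = contract b B ((innerₗ V x).smulRight y) := by simp [contract_apply, real_inner_comm]
    _ = 0 := by rw [h]; rfl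

variable [FiniteDimensional ℝ V]

lemma sum_apply_basis_eq_contract (N : V →ₗ[ℝ] V →ₗ[ℝ] V) (f g : Module.End ℝ V) :
    ∑ β, N (f (b β)) (g (b β)) = contract b N (g * adjoint f) := by
  calc ∑ β, N (f (b β)) (g (b β)) = ∑ β, ∑ α, ⟪b α, f (b β)⟫ • N (b α) (g (b β)) := by
        refine Finset.sum_congr rfl fun β _ => ?_
        conv_lhs => rw [← b.sum_repr' (f (b β))]
        simp [map_sum]
    _ = ∑ α, N (b α) (g (∑ β, ⟪b β, adjoint f (b α)⟫ • b β)) := by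
        rw [Finset.sum_comm]
        simp [map_sum, adjoint_inner_right, real_inner_comm]
    _ = contract b N (g * adjoint f) := by simp [b.sum_repr', contract_apply]

lemma contract_adjoint_of_skew {B : V →ₗ[ℝ] V →ₗ[ℝ] V} (hB : ∀ X Y, B X Y = -B Y X)
    (P : Module.End ℝ V) : contract b B (adjoint P) = -contract b B P := by
  rw [← one_mul (adjoint P), ← sum_apply_basis_eq_contract, contract_apply, ← sum_neg_distrib]
  simp [hB (P _)]

lemma contract_eq_zero_of_skew_of_adjoint_eq {B : V →ₗ[ℝ] V →ₗ[ℝ] V}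
    (hB : ∀ X Y, B X Y = -B Y X) {P : Module.End ℝ V} (hP : adjoint P = P) :
    contract b B P = 0 := by
  have : IsAddTorsionFree V := .of_isTorsionFree ℝ V
  have h := contract_adjoint_of_skew b hB P
  rw [hP] at h
  exact self_eq_neg.mp h

lemma contract_add_contract_conj_eq_zero {T : Module.End ℝ V} (hT : adjoint T = T)
    {N : V →ₗ[ℝ] V →ₗ[ℝ] V}
    (hN : ∀ X Y, N X Y + N (T X) (T Y) + T (N (T X) Y) + T (N X (T Y)) = 0)
    (P : Module.End ℝ V) :
    contract b N P + contract b N (T * P * T) + T (contract b N (P * T)) +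
      T (contract b N (T * P)) = 0 := by
  have hsum := Finset.sum_eq_zero (s := univ) fun β _ => hN (b β) (P (b β))
  simp only [sum_add_distrib, ← map_sum] at hsum
  have h₁ := sum_apply_basis_eq_contract b N T (T * P)
  have h₂ := sum_apply_basis_eq_contract b N T P
  rw [hT] at h₁ h₂
  rwa [h₂, show ∑ β, N (T (b β)) (T (P (b β))) = contract b N (T * P * T) from h₁] at hsum

end Contraction

section Involution

variable {V : Type*} [NormedAddCommGroup V] [InnerProductSpace ℝ V] [FiniteDimensional ℝ V]

-- add the vanishing on `X + T X, Y + T Y, Z + T Z` to that on `X - T X, Y - T Y, Z - T Z`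
lemma add_apply_involution_eq_zero {T : Module.End ℝ V} (hT : T * T = 1)
    (hTsymm : adjoint T = T) {N : V →ₗ[ℝ] V →ₗ[ℝ] V}
    (hpos : ∀ X Y Z, X ∈ Module.End.eigenspace T 1 → Y ∈ Module.End.eigenspace T 1 →
      Z ∈ Module.End.eigenspace T 1 → ⟪N X Y, Z⟫ = 0)
    (hneg : ∀ X Y Z, X ∈ Module.End.eigenspace (-T) 1 → Y ∈ Module.End.eigenspace (-T) 1 →
      Z ∈ Module.End.eigenspace (-T) 1 → ⟪N X Y, Z⟫ = 0)
    (X Y : V) : N X Y + N (T X) (T Y) + T (N (T X) Y) + T (N X (T Y)) = 0 := by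
  have hTT (v : V) : T (T v) = v := by rw [← Module.End.mul_apply, hT, Module.End.one_apply]
  have hmemPos (v : V) : v + T v ∈ Module.End.eigenspace T 1 := by simp [hTT, add_comm]
  have hmemNeg (v : V) : v - T v ∈ Module.End.eigenspace (-T) 1 := by simp [hTT]
  have hmove (v w : V) : ⟪T v, w⟫ = ⟪v, T w⟫ := by rw [← adjoint_inner_right, hTsymm]
  refine ext_inner_right ℝ fun Z => ?_
  have h₁ := hpos _ _ _ (hmemPos X) (hmemPos Y) (hmemPos Z)
  have h₂ := hneg _ _ _ (hmemNeg X) (hmemNeg Y) (hmemNeg Z)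
  simp only [map_add, map_sub, LinearMap.add_apply, LinearMap.sub_apply, inner_add_left,
    inner_sub_left, inner_add_right, inner_sub_right] at h₁ h₂
  simp only [inner_add_left, hmove, inner_zero_left]
  linarith

end Involution

section CliffordForm

variable {ι V : Type*} [Fintype ι] [NormedAddCommGroup V] [InnerProductSpace ℝ V]

noncomputable def wedgeForm (A : Module.End ℝ V) (q : V) : V →ₗ[ℝ] V →ₗ[ℝ] V :=
  LinearMap.mk₂ ℝ (fun X Y => ⟪A X, q⟫ • A Y - ⟪A Y, q⟫ • A X)
    (fun _ _ _ => by simp only [map_add, inner_add_left]; module)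
    (fun _ _ _ => by simp only [map_smul, real_inner_smul_left]; module)
    (fun _ _ _ => by simp only [map_add, inner_add_left]; module)
    (fun _ _ _ => by simp only [map_smul, real_inner_smul_left]; module)

@[simp] lemma wedgeForm_apply (A : Module.End ℝ V) (q X Y : V) :
    wedgeForm A q X Y = ⟪A X, q⟫ • A Y - ⟪A Y, q⟫ • A X := rfl

noncomputable def cliffordForm (S : ι → Module.End ℝ V) (q : V) : V →ₗ[ℝ] V →ₗ[ℝ] V :=
  ∑ i, wedgeForm (S i) q - wedgeForm 1 q

lemma cliffordForm_apply (S : ι → Module.End ℝ V) (q X Y : V) :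
    cliffordForm S q X Y = (∑ i, (⟪S i X, q⟫ • S i Y - ⟪S i Y, q⟫ • S i X)) -
      (⟪X, q⟫ • Y - ⟪Y, q⟫ • X) := by
  simp [cliffordForm]

lemma cliffordForm_swap (S : ι → Module.End ℝ V) (q X Y : V) :
    cliffordForm S q X Y = -cliffordForm S q Y X := by
  have hsum : ∑ i, (⟪S i X, q⟫ • S i Y - ⟪S i Y, q⟫ • S i X) =
      -∑ i, (⟪S i Y, q⟫ • S i X - ⟪S i X, q⟫ • S i Y) := by
    simp only [← sum_neg_distrib, neg_sub]
  rw [cliffordForm_apply, cliffordForm_apply, hsum]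
  abel

variable [FiniteDimensional ℝ V] {κ : Type*} [Fintype κ] (b : OrthonormalBasis κ ℝ V)

lemma contract_wedgeForm (A P : Module.End ℝ V) (q : V) :
    contract b (wedgeForm A q) P = (A * (P - adjoint P) * adjoint A) q := by
  calc contract b (wedgeForm A q) P
      = ∑ β, ⟪b β, adjoint A q⟫ • (A * P) (b β) -
          ∑ β, ⟪b β, adjoint P (adjoint A q)⟫ • A (b β) := by
        simp only [contract_apply, wedgeForm_apply, sum_sub_distrib, adjoint_inner_right]; rfl
    _ = (A * (P - adjoint P) * adjoint A) q := by
        rw [sum_inner_smul_apply, sum_inner_smul_apply]; simp [mul_sub, sub_mul]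

variable {S : ι → Module.End ℝ V}

omit [Fintype ι] in
lemma adjoint_cliffordWord (hsymm : ∀ i, adjoint (S i) = S i) (l : List ι) :
    adjoint (cliffordWord S l) = cliffordWord S l.reverse := by
  induction l with
  | nil => simp
  | cons a l ih =>
    rw [cliffordWord_cons, ← LinearMap.star_eq_adjoint, star_mul, LinearMap.star_eq_adjoint,
      LinearMap.star_eq_adjoint, ih, hsymm, List.reverse_cons, cliffordWord_append]
    simp

variable [DecidableEq ι]

omit [Fintype ι] in
lemma adjoint_cliffordWord_of_nodup (hS : IsCliffordFamily_s13 S) (hsymm : ∀ i, adjoint (S i) = S i)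
    {l : List ι} (hl : l.Nodup) :
    adjoint (cliffordWord S l) = (-1 : ℤ) ^ l.length.choose 2 • cliffordWord S l := by
  rw [adjoint_cliffordWord hsymm, hS.cliffordWord_reverse hl]

lemma contract_cliffordForm_cliffordWord (hS : IsCliffordFamily_s13 S)
    (hsymm : ∀ i, adjoint (S i) = S i) {l : List ι} (hl : l.Nodup)
    (hskew : adjoint (cliffordWord S l) = -cliffordWord S l) (q : V) :
    contract b (cliffordForm S q) (cliffordWord S l) =
      (2 * ((-1 : ℤ) ^ l.length * (Fintype.card ι - 2 * l.length) - 1)) • cliffordWord S l q := by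
  have hconj : ∑ i, (S i * (cliffordWord S l - adjoint (cliffordWord S l)) * adjoint (S i)) =
      (2 : ℤ) • ∑ i, S i * cliffordWord S l * S i := by
    simp only [hskew, hsymm, sub_neg_eq_add, ← two_zsmul, mul_smul_comm, smul_mul_assoc, smul_sum]
  rw [cliffordForm, map_sub, map_sum, LinearMap.sub_apply, LinearMap.sum_apply]
  simp only [contract_wedgeForm]
  rw [← LinearMap.sum_apply, hconj, hS.sum_conj_cliffordWord hl, hskew, adjoint_one]
  simp only [LinearMap.smul_apply, LinearMap.add_apply, sub_neg_eq_add, mul_one, one_mul]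
  module

end CliffordForm

section Matching

variable {ι V : Type*} [Fintype ι] [DecidableEq ι] [NormedAddCommGroup V]
  [InnerProductSpace ℝ V] [FiniteDimensional ℝ V] {κ : Type*} [Fintype κ]
  (b : OrthonormalBasis κ ℝ V) {S : ι → Module.End ℝ V}

-- with nine generators the coefficient of `contract_cliffordForm_cliffordWord` is `8 * (-1) ^ k`
lemma contract_sub_cliffordForm_cliffordWord_eq_zero (hS : IsCliffordFamily_s13 S)
    (hsymm : ∀ i, adjoint (S i) = S i) (hι : Fintype.card ι = 9) {N : V →ₗ[ℝ] V →ₗ[ℝ] V}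
    (hNskew : ∀ X Y, N X Y = -N Y X) {p : V}
    (hp : ∀ l : List ι, l.Nodup → (l.length = 2 ∨ l.length = 3) →
      contract b N (cliffordWord S l) = (-1 : ℤ) ^ l.length • cliffordWord S l p)
    {l : List ι} (hl : l.Nodup) (hlen : l.length ≤ 4) :
    contract b (N - cliffordForm S ((8⁻¹ : ℝ) • p)) (cliffordWord S l) = 0 := by
  have hskew (X Y : V) : (N - cliffordForm S ((8⁻¹ : ℝ) • p)) X Y =
      -(N - cliffordForm S ((8⁻¹ : ℝ) • p)) Y X := by
    simp only [LinearMap.sub_apply, hNskew X Y, cliffordForm_swap S _ X Y]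
    abel
  have hadj := adjoint_cliffordWord_of_nodup hS hsymm hl
  interval_cases hk : l.length
  · exact contract_eq_zero_of_skew_of_adjoint_eq b hskew (by simpa using hadj)
  · exact contract_eq_zero_of_skew_of_adjoint_eq b hskew (by simpa using hadj)
  · rw [map_sub, LinearMap.sub_apply, hp l hl (by omega),
      contract_cliffordForm_cliffordWord b hS hsymm hl (by simpa using hadj), hk, hι]
    norm_num
    module
  · rw [map_sub, LinearMap.sub_apply, hp l hl (by omega),
      contract_cliffordForm_cliffordWord b hS hsymm hl (by simpa [Nat.choose] using hadj), hk, hι]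
    norm_num
    module
  · exact contract_eq_zero_of_skew_of_adjoint_eq b hskew (by simpa [Nat.choose] using hadj)

end Matching

/-- Lemma 3(5): if a bilinear skew-symmetric map `N : ℝ¹⁶ × ℝ¹⁶ → ℝ¹⁶` satisfies
`⟨N(X,Y),Z⟩ = 0` whenever `X, Y, Z` all lie in the `‖w‖`-eigenspace of `S_w` for some
nonzero `w ∈ ℝ⁹`, then `N(X,Y) = Σᵢ(⟨SᵢX,q⟩SᵢY − ⟨SᵢY,q⟩SᵢX) − (⟨X,q⟩Y − ⟨Y,q⟩X)`
for some `q ∈ ℝ¹⁶`. -/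
theorem stmt13 (S : Fin 9 → (E16 →ₗ[ℝ] E16))
    (hsymm : ∀ i, LinearMap.adjoint (S i) = S i)
    (hcl : ∀ i j, S i * S j + S j * S i =
      if i = j then (2 : ℝ) • (1 : E16 →ₗ[ℝ] E16) else 0)
    (N : E16 →ₗ[ℝ] E16 →ₗ[ℝ] E16)
    (hNskew : ∀ X Y, N X Y = -N Y X)
    (hN : ∀ w : EuclideanSpace ℝ (Fin 9), w ≠ 0 → ∀ X Y Z : E16,
      X ∈ Module.End.eigenspace (∑ i, w i • S i) ‖w‖ →
      Y ∈ Module.End.eigenspace (∑ i, w i • S i) ‖w‖ →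
      Z ∈ Module.End.eigenspace (∑ i, w i • S i) ‖w‖ →
      (inner ℝ (N X Y) Z : ℝ) = 0) :
    ∃ q : E16, ∀ X Y : E16,
      N X Y = (∑ i, ((inner ℝ (S i X) q : ℝ) • S i Y - (inner ℝ (S i Y) q : ℝ) • S i X))
        - ((inner ℝ X q : ℝ) • Y - (inner ℝ Y q : ℝ) • X) := by
  have hS : IsCliffordFamily_s13 S := .of_mul_add_mul hcl
  have hcoord (m : Fin 9) (c : ℝ) (hc : ‖c‖ = 1) (X Y Z : E16)
      (hX : X ∈ Module.End.eigenspace (c • S m) 1) (hY : Y ∈ Module.End.eigenspace (c • S m) 1)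
      (hZ : Z ∈ Module.End.eigenspace (c • S m) 1) : ⟪N X Y, Z⟫ = 0 := by
    have hw : EuclideanSpace.single m c ≠ 0 := by simp [← norm_ne_zero_iff, hc]
    exact hN _ hw X Y Z (by simpa [hc] using hX) (by simpa [hc] using hY) (by simpa [hc] using hZ)
  have hinv (m : Fin 9) := add_apply_involution_eq_zero (hS.mul_self m) (hsymm m)
    (by simpa using hcoord m 1 (by simp)) (by simpa using hcoord m (-1) (by simp))
  let b := EuclideanSpace.basisFun (Fin 16) ℝ
  obtain ⟨p, hp⟩ := hS.exists_map_cliffordWord_eq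
    fun m => contract_add_contract_conj_eq_zero b (hsymm m) (hinv m)
  have hNq : N = cliffordForm S ((8⁻¹ : ℝ) • p) := by
    rw [← sub_eq_zero]
    refine eq_zero_of_contract_eq_zero b (hS.span_cliffordWord_eq_top (m := 4) (by simp) (by simp))
      fun s => ?_
    exact contract_sub_cliffordForm_cliffordWord_eq_zero b hS hsymm (by simp) hNskew hp
      s.1.nodup_toList (by simpa using s.2)
  exact ⟨(8⁻¹ : ℝ) • p, fun X Y => by rw [hNq, cliffordForm_apply]⟩
end

section
/- Let J_1, …, J_8 be an anticommuting family of almost Hermitian structures on ℝ^16 and set P = J_1J_2···J_8. Then P is symmetric (self-adjoint), orthogonal, and Tr P = 0; consequently the eigenvalues of P are +1 and −1, each eigenspace V_+ and V_− has dimension 8, and J_iV_± = V_∓ for every i = 1, …, 8. -/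
structure IsCliffordFamily_s16 {ι R : Type*} [Ring R] (J : ι → R) : Prop where
  mul_self : ∀ i, J i * J i = -1
  mul_comm_of_ne : ∀ {i j}, i ≠ j → J i * J j = -(J j * J i)

namespace IsCliffordFamily_s16

variable {ι R : Type*} [Ring R] {J : ι → R}

theorem mul_list_prod [DecidableEq ι] (hJ : IsCliffordFamily_s16 J) (i : ι) (L : List ι) :
    J i * (L.map J).prod = (-1 : ℤ) ^ (L.length + L.count i) • ((L.map J).prod * J i) := by
  induction L with
  | nil => simp
  | cons x L ih =>
    simp only [List.map_cons, List.prod_cons, List.length_cons, List.count_cons, beq_iff_eq]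
    by_cases hx : x = i
    · subst hx
      conv_lhs => rw [ih, mul_smul_comm, ← mul_assoc]
      rw [if_pos rfl]
      congr 1
      ring
    · rw [← mul_assoc, hJ.mul_comm_of_ne (Ne.symm hx), neg_mul, mul_assoc, ih]
      rw [mul_smul_comm, ← mul_assoc, ← neg_smul, if_neg hx]
      congr 1
      ring

theorem mul_list_prod_of_notMem [DecidableEq ι] (hJ : IsCliffordFamily_s16 J) {i : ι} {L : List ι}
    (hi : i ∉ L) : J i * (L.map J).prod = (-1 : ℤ) ^ L.length • ((L.map J).prod * J i) := by
  rw [hJ.mul_list_prod, List.count_eq_zero_of_not_mem hi, add_zero]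

theorem list_prod_mul_of_notMem [DecidableEq ι] (hJ : IsCliffordFamily_s16 J) {i : ι} {L : List ι}
    (hi : i ∉ L) : (L.map J).prod * J i = (-1 : ℤ) ^ L.length • (J i * (L.map J).prod) := by
  rw [hJ.mul_list_prod_of_notMem hi, smul_smul, ← mul_pow, neg_one_mul, neg_neg, one_pow,
    one_smul]

theorem list_prod_mul_self (hJ : IsCliffordFamily_s16 J) {L : List ι} (hL : L.Nodup) :
    (L.map J).prod * (L.map J).prod = (-1 : ℤ) ^ (L.length + 1).choose 2 • 1 := by
  classical
  induction L with
  | nil => simp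
  | cons x L ih =>
    obtain ⟨hx, hL⟩ := List.nodup_cons.mp hL
    simp only [List.map_cons, List.prod_cons, List.length_cons]
    calc J x * (L.map J).prod * (J x * (L.map J).prod)
        = (-1 : ℤ) ^ L.length • (J x * ((L.map J).prod * (L.map J).prod) * J x) := by
          conv_lhs => arg 2; rw [hJ.mul_list_prod_of_notMem hx]
          simp only [mul_smul_comm, mul_assoc]
      _ = ((-1 : ℤ) ^ L.length * (-1 : ℤ) ^ (L.length + 1).choose 2) • (J x * J x) := by
          rw [ih hL, mul_smul_comm, mul_one, smul_mul_assoc, smul_smul]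
      _ = (-1 : ℤ) ^ (L.length + 1 + 1).choose 2 • 1 := by
          rw [hJ.mul_self, smul_neg, ← neg_smul, Nat.choose_succ_succ (L.length + 1) 1,
            Nat.choose_one_right]
          congr 1
          ring

theorem star_list_prod [StarRing R] (hJ : IsCliffordFamily_s16 J) (hstar : ∀ i, star (J i) = -J i)
    {L : List ι} (hL : L.Nodup) :
    star (L.map J).prod = (-1 : ℤ) ^ (L.length + 1).choose 2 • (L.map J).prod := by
  classical
  induction L with
  | nil => simp
  | cons x L ih =>
    obtain ⟨hx, hL⟩ := List.nodup_cons.mp hL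
    simp only [List.map_cons, List.prod_cons, List.length_cons, star_mul, hstar, ih hL]
    rw [smul_mul_assoc, mul_neg, hJ.list_prod_mul_of_notMem hx, ← neg_smul, smul_smul,
      Nat.choose_succ_succ (L.length + 1) 1, Nat.choose_one_right]
    congr 1
    ring

theorem isUnit (hJ : IsCliffordFamily_s16 J) (i : ι) : IsUnit (J i) :=
  ⟨⟨J i, -J i, by rw [mul_neg, hJ.mul_self, neg_neg], by rw [neg_mul, hJ.mul_self, neg_neg]⟩,
    rfl⟩

theorem of_mul_add_mul_eq {K : Type*} [Field K] [NeZero (2 : K)] [Algebra K R] [DecidableEq ι]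
    (h : ∀ i j, J i * J j + J j * J i = if i = j then (-2 : K) • 1 else 0) :
    IsCliffordFamily_s16 J where
  mul_self i := by
    have hi := h i i
    rw [if_pos rfl, ← two_smul K, neg_smul, ← smul_neg] at hi
    exact smul_right_injective R two_ne_zero hi
  mul_comm_of_ne {i j} hij := by
    have hij' := h i j
    rw [if_neg hij] at hij'
    exact eq_neg_of_add_eq_zero_left hij'

end IsCliffordFamily_s16

theorem eq_zero_of_eq_neg (K : Type*) {V : Type*} [DivisionRing K] [NeZero (2 : K)]
    [AddCommGroup V] [Module K V] {x : V} (h : x = -x) : x = 0 := by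
  have h2 : (2 : K) • x = 0 := by
    rw [two_smul]
    nth_rewrite 2 [h]
    exact add_neg_cancel x
  exact (smul_eq_zero.mp h2).resolve_left two_ne_zero

namespace Module.End

variable {K V : Type*} [Field K] [AddCommGroup V] [Module K V] {f g : Module.End K V}

theorem eq_one_or_eq_neg_one_of_hasEigenvalue (hf : f * f = 1) {μ : K} (hμ : f.HasEigenvalue μ) :
    μ = 1 ∨ μ = -1 := by
  obtain ⟨v, hv⟩ := hμ.exists_hasEigenvector
  have hv2 := hv.pow_apply 2
  rw [sq, hf, one_apply] at hv2
  exact sq_eq_one_iff.mp (smul_left_injective K hv.2 (by simpa using hv2.symm))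

theorem isCompl_eigenspace_one_neg_one [NeZero (2 : K)] (hf : f * f = 1) :
    IsCompl (f.eigenspace 1) (f.eigenspace (-1)) := by
  have hff (x : V) : f (f x) = x := by rw [← mul_apply, hf, one_apply]
  constructor
  · rw [Submodule.disjoint_def]
    intro x h1 h2
    rw [mem_eigenspace_iff] at h1 h2
    rw [h1, one_smul, neg_one_smul] at h2
    exact eq_zero_of_eq_neg K h2
  · rw [codisjoint_iff, eq_top_iff]
    intro x _
    have h1 : (2⁻¹ : K) • (x + f x) ∈ f.eigenspace 1 := by
      rw [mem_eigenspace_iff, map_smul, map_add, hff, one_smul, add_comm]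
    have h2 : (2⁻¹ : K) • (x - f x) ∈ f.eigenspace (-1) := by
      rw [mem_eigenspace_iff, map_smul, map_sub, hff, neg_one_smul, ← smul_neg, neg_sub]
    convert Submodule.add_mem_sup h1 h2 using 1
    rw [← smul_add, add_add_sub_cancel, ← two_smul K, smul_smul, inv_mul_cancel₀ two_ne_zero,
      one_smul]

theorem map_eigenspace_le_of_mul_eq_neg_mul (h : g * f = -(f * g)) (μ : K) :
    (f.eigenspace μ).map g ≤ f.eigenspace (-μ) := by
  rintro _ ⟨x, hx, rfl⟩
  rw [SetLike.mem_coe, mem_eigenspace_iff] at *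
  rw [← mul_apply, ← neg_neg (f * g), ← h, LinearMap.neg_apply, mul_apply, hx, map_smul,
    neg_smul]

theorem map_eigenspace_of_mul_eq_neg_mul (hg : IsUnit g) (h : g * f = -(f * g)) (μ : K) :
    (f.eigenspace μ).map g = f.eigenspace (-μ) := by
  obtain ⟨u, rfl⟩ := hg
  have hinv : ↑u⁻¹ * f = -(f * ↑u⁻¹) :=
    calc ↑u⁻¹ * f = ↑u⁻¹ * (f * ↑u) * ↑u⁻¹ := by
          rw [mul_assoc, mul_assoc, Units.mul_inv, mul_one]
      _ = -(f * ↑u⁻¹) := by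
        rw [← neg_neg (f * ↑u), ← h, mul_neg, neg_mul, ← mul_assoc, Units.inv_mul, one_mul]
  refine le_antisymm (map_eigenspace_le_of_mul_eq_neg_mul h μ) fun y hy ↦ ?_
  have hy' := map_eigenspace_le_of_mul_eq_neg_mul hinv (-μ) ⟨y, hy, rfl⟩
  rw [neg_neg] at hy'
  refine ⟨(↑u⁻¹ : Module.End K V) y, hy', ?_⟩
  rw [← mul_apply, Units.mul_inv, one_apply]

theorem finrank_eigenspace_neg (hg : IsUnit g) (h : g * f = -(f * g)) (μ : K) :
    Module.finrank K (f.eigenspace (-μ)) = Module.finrank K (f.eigenspace μ) := by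
  rw [← map_eigenspace_of_mul_eq_neg_mul hg h]
  exact (Submodule.equivMapOfInjective g ((isUnit_iff g).mp hg).injective _).finrank_eq.symm

end Module.End

theorem LinearMap.trace_eq_zero_of_mul_eq_neg_mul {K V : Type*} [Field K] [NeZero (2 : K)]
    [AddCommGroup V] [Module K V] {f g : Module.End K V} (hg : IsUnit g) (h : g * f = -(f * g)) :
    LinearMap.trace K V f = 0 := by
  obtain ⟨u, rfl⟩ := hg
  have hconj : f = -(↑u * f * ↑u⁻¹) := by
    rw [h, neg_mul, neg_neg, mul_assoc, Units.mul_inv, mul_one]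
  have : LinearMap.trace K V f = -LinearMap.trace K V f := by
    conv_lhs => rw [hconj]
    rw [map_neg, LinearMap.trace_conj]
  exact eq_zero_of_eq_neg K this

/-- For an anticommuting family of 8 almost Hermitian structures on `ℝ¹⁶`, the product
`P = J₁J₂⋯J₈` is symmetric, orthogonal, traceless; its eigenvalues are `±1`, each
eigenspace is 8-dimensional, and every `Jᵢ` interchanges the two eigenspaces. -/
theorem stmt16 (J : Fin 8 → (E16 →ₗ[ℝ] E16))
    (hskew : ∀ i, LinearMap.adjoint (J i) = -(J i))
    (hcl : ∀ i j, J i * J j + J j * J i =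
      if i = j then (-2 : ℝ) • (1 : E16 →ₗ[ℝ] E16) else 0)
    (P : E16 →ₗ[ℝ] E16) (hP : P = ((List.finRange 8).map J).prod) :
    LinearMap.adjoint P = P ∧
    (∀ x y : E16, (inner ℝ (P x) (P y) : ℝ) = inner ℝ x y) ∧
    LinearMap.trace ℝ E16 P = 0 ∧
    (∀ μ : ℝ, Module.End.HasEigenvalue P μ → μ = 1 ∨ μ = -1) ∧
    Module.finrank ℝ (Module.End.eigenspace P 1) = 8 ∧
    Module.finrank ℝ (Module.End.eigenspace P (-1)) = 8 ∧
    (∀ i, Submodule.map (J i) (Module.End.eigenspace P 1) = Module.End.eigenspace P (-1) ∧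
      Submodule.map (J i) (Module.End.eigenspace P (-1)) = Module.End.eigenspace P 1) := by
  have hJ : IsCliffordFamily_s16 J := .of_mul_add_mul_eq hcl
  have hL := List.nodup_finRange 8
  have hPP : P * P = 1 := by
    rw [hP, hJ.list_prod_mul_self hL]
    norm_num [Nat.choose_two_right]
  have hPsa : LinearMap.adjoint P = P := by
    rw [← LinearMap.star_eq_adjoint, hP,
      hJ.star_list_prod (fun i ↦ (LinearMap.star_eq_adjoint _).trans (hskew i)) hL]
    norm_num [Nat.choose_two_right]
  have hJP (i : Fin 8) : J i * P = -(P * J i) := by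
    rw [hP, hJ.mul_list_prod, List.count_eq_one_of_mem hL (List.mem_finRange i)]
    norm_num
  have hdim := Submodule.finrank_add_eq_of_isCompl (Module.End.isCompl_eigenspace_one_neg_one hPP)
  have hdim' := Module.End.finrank_eigenspace_neg (hJ.isUnit 0) (hJP 0) 1
  rw [finrank_euclideanSpace_fin] at hdim
  refine ⟨hPsa, fun x y ↦ ?_, LinearMap.trace_eq_zero_of_mul_eq_neg_mul (hJ.isUnit 0) (hJP 0),
    fun μ ↦ Module.End.eq_one_or_eq_neg_one_of_hasEigenvalue hPP, by omega, by omega,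
    fun i ↦ ⟨?_, ?_⟩⟩
  · rw [← LinearMap.adjoint_inner_right, hPsa, ← Module.End.mul_apply, hPP,
      Module.End.one_apply]
  · exact Module.End.map_eigenspace_of_mul_eq_neg_mul (hJ.isUnit i) (hJP i) 1
  · simpa using Module.End.map_eigenspace_of_mul_eq_neg_mul (hJ.isUnit i) (hJP i) (-1)
end
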